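/- Suppose that for each receiver r, (γ^{r,k})_{k∈𝒦_r} is an incentive compatible menu, and define the truthful play probabilities p^{r,k}_θ := (1/μ_θ) Σ_{ξ : b^{r,k}_ξ = a1} γ^{r,k}_ξ ξ_θ ∈ [0,1]. Then there exist persuasive, incentive compatible direct marginal menus (x^{r,k})_{k∈𝒦_r} for each receiver r and, for every type profile 𝐤 ∈ 𝒦̄ and every state θ, a probability distribution φ^𝐤_θ on the subsets of ℛ with marginals Σ_{R ∋ r} φ^𝐤_θ(R) = x^{r,k_r}_θ for all r, such that for every family (ψ^𝐤_θ)_{𝐤∈𝒦̄, θ∈Θ} of probability distributions on the subsets of ℛ with marginals Σ_{R ∋ r} ψ^𝐤_θ(R) = p^{r,k_r}_θ for all r, one has Σ_{𝐤∈𝒦̄} λ_𝐤 Σ_θ μ_θ Σ_{R⊆ℛ} φ^𝐤_θ(R) f_θ(R) ≥ Σ_{𝐤∈𝒦̄} λ_𝐤 Σ_θ μ_θ Σ_{R⊆ℛ} ψ^𝐤_θ(R) f_θ(R). (In multi-receiver instances there always exists an optimal sender's strategy that uses menus of direct and persuasive marginal signaling schemes.) -/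

import Mathlib

/-!
The truthful play probabilities `p` already form a persuasive and incentive compatible direct
menu: recommending `a1` with probability `p^{r,k}_θ` pools exactly the posteriors of `γ^{r,k}` at
which type `k` plays `a1`. Each pooled posterior favours the recommended action, which gives
persuasiveness. A type `k` misreporting `k'` and then best-responding to the recommendation does
no better than best-responding to every posterior of `γ^{r,k'}`, which by incentive
compatibility of `γ` is worth at most the truthful payoff, and that is also the truthful payoff of
the direct menu. For every type profile and state, the couplings with marginals `p` form a compact
set, nonempty because it contains the independent coupling, so the sender's expected utility
attains its maximum on it; this maximiser is the required `φ`.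
-/

open Finset

noncomputable section

/-- Best response of a receiver of type `k` at posterior `ξ`, with binary actions
(`true` = a1, `false` = a0) and ties broken in favor of `a1`. -/
noncomputable def bestA1 {Θ 𝒦 : Type*} [Fintype Θ]
    (u : 𝒦 → Θ → Bool → ℝ) (k : 𝒦) (ξ : Θ → ℝ) : Bool :=
  if ∑ θ, ξ θ * u k θ false ≤ ∑ θ, ξ θ * u k θ true then true else false

section BestResponse

variable {Θ 𝒦 : Type*} [Fintype Θ] (u : 𝒦 → Θ → Bool → ℝ) (k : 𝒦) (ξ : Θ → ℝ)

lemma sum_mul_le_sum_mul_bestA1 (a : Bool) :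
    ∑ θ, ξ θ * u k θ a ≤ ∑ θ, ξ θ * u k θ (bestA1 u k ξ) := by
  unfold bestA1
  split_ifs <;> cases a <;> linarith

lemma sum_mul_sub_nonneg_of_bestA1_eq {a : Bool} (h : bestA1 u k ξ = a) :
    0 ≤ ∑ θ, ξ θ * (u k θ a - u k θ !a) := by
  simp only [mul_sub, sum_sub_distrib, sub_nonneg]
  exact h ▸ sum_mul_le_sum_mul_bestA1 u k ξ _

end BestResponse

lemma sum_filter_eq_true_add_sum_filter_eq_false {ι M : Type*} [AddCommMonoid M]
    (s : Finset ι) (b : ι → Bool) (g : ι → M) :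
    ∑ i ∈ s with b i = true, g i + ∑ i ∈ s with b i = false, g i = ∑ i ∈ s, g i := by
  simpa only [Bool.not_eq_true] using sum_filter_add_sum_filter_not s (fun i => b i = true) g

section ActionMass

variable {Θ : Type*} (γ : (Θ → ℝ) →₀ ℝ) (b : (Θ → ℝ) → Bool)

/-- For a Bayes-plausible `γ`, the joint probability of the state `θ` and of the posterior `ξ`
drawn from `γ` being answered by `b ξ = a`. -/
def actionMass (a : Bool) (θ : Θ) : ℝ :=
  ∑ ξ ∈ γ.support with b ξ = a, γ ξ * ξ θ

lemma actionMass_nonneg (hγ : ∀ ξ, 0 ≤ γ ξ) (hpost : ∀ ξ ∈ γ.support, ∀ θ, 0 ≤ ξ θ)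
    (a : Bool) (θ : Θ) : 0 ≤ actionMass γ b a θ :=
  sum_nonneg fun ξ hξ => mul_nonneg (hγ ξ) (hpost ξ (mem_filter.1 hξ).1 θ)

lemma actionMass_true_add_false (θ : Θ) :
    actionMass γ b true θ + actionMass γ b false θ = ∑ ξ ∈ γ.support, γ ξ * ξ θ :=
  sum_filter_eq_true_add_sum_filter_eq_false _ _ _

lemma sum_actionMass_mul [Fintype Θ] (a : Bool) (c : Θ → ℝ) :
    ∑ θ, actionMass γ b a θ * c θ = ∑ ξ ∈ γ.support with b ξ = a, γ ξ * ∑ θ, ξ θ * c θ := by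
  simp only [actionMass, sum_mul, mul_sum]
  rw [sum_comm]
  exact sum_congr rfl fun ξ _ => sum_congr rfl fun θ _ => by ring

lemma sum_actionMass_mul_add [Fintype Θ] (c : Bool → Θ → ℝ) :
    ∑ θ, (actionMass γ b true θ * c true θ + actionMass γ b false θ * c false θ) =
      ∑ ξ ∈ γ.support, γ ξ * ∑ θ, ξ θ * c (b ξ) θ := by
  rw [sum_add_distrib, sum_actionMass_mul, sum_actionMass_mul,
    ← sum_filter_eq_true_add_sum_filter_eq_false γ.support b]
  congr 1 <;> exact sum_congr rfl fun ξ hξ => by rw [(mem_filter.1 hξ).2]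

end ActionMass

section DirectMenu

variable {Θ 𝒦 : Type*} [Fintype Θ] {μ : Θ → ℝ} {u : 𝒦 → Θ → Bool → ℝ}
  {γ : 𝒦 → (Θ → ℝ) →₀ ℝ} {x : 𝒦 → Θ → ℝ}

lemma sum_actionMass_bestA1_mul_sub_nonneg (hγ : ∀ k ξ, 0 ≤ γ k ξ) (k : 𝒦) (a : Bool) :
    0 ≤ ∑ θ, actionMass (γ k) (bestA1 u k) a θ * (u k θ a - u k θ !a) := by
  rw [sum_actionMass_mul]
  exact sum_nonneg fun ξ hξ =>
    mul_nonneg (hγ k ξ) (sum_mul_sub_nonneg_of_bestA1_eq u k ξ (mem_filter.1 hξ).2)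

/-- Type `k` facing the entry of type `k'` gains nothing over best-responding to each posterior
by playing a fixed action `a` against the pooled recommendation `a'`. -/
lemma sum_actionMass_mul_le (hγ : ∀ k ξ, 0 ≤ γ k ξ) (b : (Θ → ℝ) → Bool) (k k' : 𝒦)
    (a' a : Bool) :
    ∑ θ, actionMass (γ k') b a' θ * u k θ a ≤
      ∑ ξ ∈ (γ k').support with b ξ = a', γ k' ξ * ∑ θ, ξ θ * u k θ (bestA1 u k ξ) := by
  rw [sum_actionMass_mul]
  exact sum_le_sum fun ξ _ =>
    mul_le_mul_of_nonneg_left (sum_mul_le_sum_mul_bestA1 u k ξ a) (hγ k' ξ)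

lemma mul_one_sub_eq_actionMass_false
    (hbayes : ∀ k θ, ∑ ξ ∈ (γ k).support, γ k ξ * ξ θ = μ θ)
    (hx : ∀ k θ, μ θ * x k θ = actionMass (γ k) (bestA1 u k) true θ) (k : 𝒦) (θ : Θ) :
    μ θ * (1 - x k θ) = actionMass (γ k) (bestA1 u k) false θ := by
  linarith [hx k θ, hbayes k θ, actionMass_true_add_false (γ k) (bestA1 u k) θ]

variable (hx : ∀ k θ, μ θ * x k θ = actionMass (γ k) (bestA1 u k) true θ)
  (hx' : ∀ k θ, μ θ * (1 - x k θ) = actionMass (γ k) (bestA1 u k) false θ)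
include hx hx'

lemma mem_Icc_of_mul_eq_actionMass (hμ : ∀ θ, 0 < μ θ) (hγ : ∀ k ξ, 0 ≤ γ k ξ)
    (hpost : ∀ k, ∀ ξ ∈ (γ k).support, ∀ θ, 0 ≤ ξ θ) (k : 𝒦) (θ : Θ) :
    x k θ ∈ Set.Icc (0 : ℝ) 1 := by
  have h₁ := actionMass_nonneg (γ k) (bestA1 u k) (hγ k) (hpost k) true θ
  have h₀ := actionMass_nonneg (γ k) (bestA1 u k) (hγ k) (hpost k) false θ
  rw [← hx] at h₁
  rw [← hx'] at h₀
  constructor <;> nlinarith [hμ θ]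

lemma persuasive_of_mul_eq_actionMass (hγ : ∀ k ξ, 0 ≤ γ k ξ) (k : 𝒦) :
    0 ≤ ∑ θ, μ θ * x k θ * (u k θ true - u k θ false) ∧
      0 ≤ ∑ θ, μ θ * (1 - x k θ) * (u k θ false - u k θ true) := by
  simp only [hx, hx']
  exact ⟨sum_actionMass_bestA1_mul_sub_nonneg hγ k true,
    sum_actionMass_bestA1_mul_sub_nonneg hγ k false⟩

lemma incentiveCompatible_of_mul_eq_actionMass (hγ : ∀ k ξ, 0 ≤ γ k ξ) {k k' : 𝒦}
    (hIC : ∑ ξ ∈ (γ k').support, γ k' ξ * ∑ θ, ξ θ * u k θ (bestA1 u k ξ) ≤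
      ∑ ξ ∈ (γ k).support, γ k ξ * ∑ θ, ξ θ * u k θ (bestA1 u k ξ)) :
    max (∑ θ, μ θ * x k' θ * u k θ true) (∑ θ, μ θ * x k' θ * u k θ false) +
        max (∑ θ, μ θ * (1 - x k' θ) * u k θ true) (∑ θ, μ θ * (1 - x k' θ) * u k θ false) ≤
      ∑ θ, μ θ * (x k θ * u k θ true + (1 - x k θ) * u k θ false) := by
  have htruthful : ∑ θ, μ θ * (x k θ * u k θ true + (1 - x k θ) * u k θ false) =
      ∑ θ, (actionMass (γ k) (bestA1 u k) true θ * u k θ true +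
        actionMass (γ k) (bestA1 u k) false θ * u k θ false) :=
    sum_congr rfl fun θ _ => by rw [← hx, ← hx']; ring
  rw [htruthful, sum_actionMass_mul_add (γ k) (bestA1 u k) fun a θ => u k θ a]
  simp only [hx, hx']
  calc _ ≤ ∑ ξ ∈ (γ k').support with bestA1 u k' ξ = true,
          γ k' ξ * ∑ θ, ξ θ * u k θ (bestA1 u k ξ) +
        ∑ ξ ∈ (γ k').support with bestA1 u k' ξ = false,
          γ k' ξ * ∑ θ, ξ θ * u k θ (bestA1 u k ξ) := by
        gcongr <;> exact max_le (sum_actionMass_mul_le hγ _ k k' _ _)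
          (sum_actionMass_mul_le hγ _ k k' _ _)
    _ = _ := sum_filter_eq_true_add_sum_filter_eq_false _ _ _
    _ ≤ _ := hIC

end DirectMenu

section Coupling

variable {ℛ : Type*} [Fintype ℛ] [DecidableEq ℛ]

def marginalCouplings (q : ℛ → ℝ) : Set (Finset ℛ → ℝ) :=
  {φ | (∀ R, 0 ≤ φ R) ∧ ∑ R, φ R = 1 ∧ ∀ r, ∑ R with r ∈ R, φ R = q r}

def independentCoupling (q : ℛ → ℝ) (R : Finset ℛ) : ℝ :=
  (∏ r ∈ R, q r) * ∏ r ∈ Rᶜ, (1 - q r)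

lemma independentCoupling_mem_marginalCouplings {q : ℛ → ℝ}
    (hq : ∀ r, q r ∈ Set.Icc (0 : ℝ) 1) : independentCoupling q ∈ marginalCouplings q := by
  refine ⟨fun R => mul_nonneg (prod_nonneg fun r _ => (hq r).1)
      (prod_nonneg fun r _ => sub_nonneg.2 (hq r).2), ?_, fun r => ?_⟩
  · simpa [independentCoupling] using (Fintype.prod_add q (fun r => 1 - q r)).symm
  -- killing the factor `1 - q r` leaves exactly the subsets containing `r`
  have hprod := Fintype.prod_add q (fun i => if i = r then 0 else 1 - q i)
  rw [Fintype.prod_eq_single r fun i hi => by simp [hi], if_pos rfl, add_zero] at hprod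
  rw [hprod, sum_filter]
  refine sum_congr rfl fun R _ => ?_
  split_ifs with hr
  · exact congrArg _ (prod_congr rfl fun i hi => by rw [if_neg (ne_of_mem_of_not_mem hr
      (mem_compl.1 hi)).symm])
  · rw [Finset.prod_eq_zero (f := fun i => if i = r then 0 else 1 - q i) (mem_compl.2 hr)
      (if_pos rfl), mul_zero]

lemma isCompact_marginalCouplings (q : ℛ → ℝ) : IsCompact (marginalCouplings q) := by
  have hclosed : IsClosed (marginalCouplings q) := by
    simp only [marginalCouplings, Set.ofPred_and, Set.ofPred_forall]
    refine (isClosed_iInter fun R => isClosed_le continuous_const (continuous_apply R)).inter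
      ((isClosed_eq (by fun_prop) continuous_const).inter
        (isClosed_iInter fun r => isClosed_eq (by fun_prop) continuous_const))
  refine (isCompact_univ_pi fun _ => isCompact_Icc (a := (0 : ℝ)) (b := 1)).of_isClosed_subset
    hclosed ?_
  rintro φ ⟨hφ, hφsum, -⟩ R -
  exact ⟨hφ R, hφsum ▸ single_le_sum (fun R' _ => hφ R') (mem_univ R)⟩

lemma exists_isMaxOn_marginalCouplings {q : ℛ → ℝ} (hq : ∀ r, q r ∈ Set.Icc (0 : ℝ) 1)
    (F : Finset ℛ → ℝ) :
    ∃ φ ∈ marginalCouplings q, IsMaxOn (fun ψ => ∑ R, ψ R * F R) (marginalCouplings q) φ :=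
  (isCompact_marginalCouplings q).exists_isMaxOn
    ⟨_, independentCoupling_mem_marginalCouplings hq⟩ (by fun_prop)

end Coupling

theorem exists_optimal_direct_marginal_strategy_general
    {Θ ℛ : Type*} {𝒦 : ℛ → Type*}
    [Fintype Θ] [Fintype ℛ] [DecidableEq ℛ] [∀ r, Fintype (𝒦 r)]
    (μ : Θ → ℝ) (hμpos : ∀ θ, 0 < μ θ)
    (u : ∀ r : ℛ, 𝒦 r → Θ → Bool → ℝ)
    -- the sender's monotone set functions
    (f : Θ → Finset ℛ → ℝ)
    -- distribution over type profiles
    (lam : (∀ r, 𝒦 r) → ℝ) (hlam : ∀ 𝕜, 0 ≤ lam 𝕜)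
    -- the given incentive compatible menus, one per receiver
    (γ : ∀ r : ℛ, 𝒦 r → ((Θ → ℝ) →₀ ℝ))
    (hγnn : ∀ r k ξ, 0 ≤ γ r k ξ)
    (hγpost : ∀ r k, ∀ ξ ∈ (γ r k).support, (∀ θ, 0 ≤ ξ θ) ∧ ∑ θ, ξ θ = 1)
    (hγbayes : ∀ r k θ, ∑ ξ ∈ (γ r k).support, γ r k ξ * ξ θ = μ θ)
    (hγIC : ∀ r : ℛ, ∀ k k' : 𝒦 r, k ≠ k' →
      ∑ ξ ∈ (γ r k').support, γ r k' ξ * ∑ θ, ξ θ * u r k θ (bestA1 (u r) k ξ) ≤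
        ∑ ξ ∈ (γ r k).support, γ r k ξ * ∑ θ, ξ θ * u r k θ (bestA1 (u r) k ξ))
    -- truthful play probabilities
    (p : ∀ r : ℛ, 𝒦 r → Θ → ℝ)
    (hp : ∀ r k θ, p r k θ =
      (∑ ξ ∈ (γ r k).support, (if bestA1 (u r) k ξ = true then γ r k ξ * ξ θ else 0)) / μ θ) :
    ∃ (x : ∀ r : ℛ, 𝒦 r → Θ → ℝ) (φ : (∀ r, 𝒦 r) → Θ → Finset ℛ → ℝ),
      (∀ r k θ, x r k θ ∈ Set.Icc (0 : ℝ) 1) ∧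
      -- persuasiveness of each direct marginal menu
      (∀ r k, 0 ≤ ∑ θ, μ θ * x r k θ * (u r k θ true - u r k θ false)) ∧
      (∀ r k, 0 ≤ ∑ θ, μ θ * (1 - x r k θ) * (u r k θ false - u r k θ true)) ∧
      -- incentive compatibility of each direct marginal menu
      (∀ r : ℛ, ∀ k k' : 𝒦 r, k ≠ k' →
        max (∑ θ, μ θ * x r k' θ * u r k θ true) (∑ θ, μ θ * x r k' θ * u r k θ false) +
          max (∑ θ, μ θ * (1 - x r k' θ) * u r k θ true)
              (∑ θ, μ θ * (1 - x r k' θ) * u r k θ false) ≤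
        ∑ θ, μ θ * (x r k θ * u r k θ true + (1 - x r k θ) * u r k θ false)) ∧
      -- `φ` is a signaling scheme consistent with the marginals `x`
      (∀ 𝕜 : ∀ r, 𝒦 r, lam 𝕜 ≠ 0 → ∀ θ,
        (∀ R : Finset ℛ, 0 ≤ φ 𝕜 θ R) ∧
        (∑ R : Finset ℛ, φ 𝕜 θ R = 1) ∧
        (∀ r : ℛ, ∑ R ∈ Finset.univ.filter (fun R : Finset ℛ => r ∈ R), φ 𝕜 θ R =
          x r (𝕜 r) θ)) ∧
      -- optimality against every scheme consistent with the truthful play probabilities `p`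
      (∀ ψ : (∀ r, 𝒦 r) → Θ → Finset ℛ → ℝ,
        (∀ 𝕜 : ∀ r, 𝒦 r, lam 𝕜 ≠ 0 → ∀ θ,
          (∀ R : Finset ℛ, 0 ≤ ψ 𝕜 θ R) ∧
          (∑ R : Finset ℛ, ψ 𝕜 θ R = 1) ∧
          (∀ r : ℛ, ∑ R ∈ Finset.univ.filter (fun R : Finset ℛ => r ∈ R), ψ 𝕜 θ R =
            p r (𝕜 r) θ)) →
        ∑ 𝕜, lam 𝕜 * ∑ θ, μ θ * ∑ R : Finset ℛ, ψ 𝕜 θ R * f θ R ≤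
          ∑ 𝕜, lam 𝕜 * ∑ θ, μ θ * ∑ R : Finset ℛ, φ 𝕜 θ R * f θ R) := by
  have hx : ∀ r k θ, μ θ * p r k θ = actionMass (γ r k) (bestA1 (u r) k) true θ := fun r k θ => by
    rw [hp, actionMass, sum_filter, mul_div_cancel₀ _ (hμpos θ).ne']
  have hx' r := mul_one_sub_eq_actionMass_false (hγbayes r) (hx r)
  have hpost r k ξ hξ := (hγpost r k ξ hξ).1
  have hp01 r := mem_Icc_of_mul_eq_actionMass (hx r) (hx' r) hμpos (hγnn r) (hpost r)
  choose φ hφ hφmax using fun (𝕜 : ∀ r, 𝒦 r) θ =>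
    exists_isMaxOn_marginalCouplings (fun r => hp01 r (𝕜 r) θ) (f θ)
  refine ⟨p, φ, hp01, fun r k => (persuasive_of_mul_eq_actionMass (hx r) (hx' r) (hγnn r) k).1,
    fun r k => (persuasive_of_mul_eq_actionMass (hx r) (hx' r) (hγnn r) k).2,
    fun r k k' hk => incentiveCompatible_of_mul_eq_actionMass (hx r) (hx' r) (hγnn r)
      (hγIC r k k' hk), fun 𝕜 _ θ => hφ 𝕜 θ, fun ψ hψ => sum_le_sum fun 𝕜 _ => ?_⟩
  rcases eq_or_ne (lam 𝕜) 0 with h0 | h0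
  · simp [h0]
  exact mul_le_mul_of_nonneg_left (sum_le_sum fun θ _ =>
    mul_le_mul_of_nonneg_left (hφmax 𝕜 θ (hψ 𝕜 h0 θ)) (hμpos θ).le) (hlam 𝕜)

/-- Multi-receiver Bayesian persuasion with type reporting, binary actions and
no inter-agent externalities: given incentive compatible menus `(γ r k)` for the receivers, with
truthful play probabilities `p r k θ`, there exist persuasive incentive compatible direct
marginal menus `(x r k)` and, for every type profile in the support of `λ` and every state, a
distribution `φ` over subsets of receivers with marginals `x`, whose sender expected utility is
at least that of every family `ψ` of distributions with marginals `p`. -/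
theorem exists_optimal_direct_marginal_strategy
    {Θ ℛ : Type*} {𝒦 : ℛ → Type*}
    [Fintype Θ] [Fintype ℛ] [DecidableEq ℛ] [∀ r, Fintype (𝒦 r)]
    [Nonempty Θ] [Nonempty ℛ] [∀ r, Nonempty (𝒦 r)]
    (μ : Θ → ℝ) (hμpos : ∀ θ, 0 < μ θ) (hμsum : ∑ θ, μ θ = 1)
    (u : ∀ r : ℛ, 𝒦 r → Θ → Bool → ℝ)
    (hu : ∀ r k θ a, u r k θ a ∈ Set.Icc (0 : ℝ) 1)
    -- the sender's monotone set functions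
    (f : Θ → Finset ℛ → ℝ) (hf01 : ∀ θ R, f θ R ∈ Set.Icc (0 : ℝ) 1)
    (hfmono : ∀ θ, ∀ R R' : Finset ℛ, R ⊆ R' → f θ R ≤ f θ R')
    -- distribution over type profiles
    (lam : (∀ r, 𝒦 r) → ℝ) (hlam : ∀ 𝕜, 0 ≤ lam 𝕜) (hlamsum : ∑ 𝕜, lam 𝕜 = 1)
    -- the given incentive compatible menus, one per receiver
    (γ : ∀ r : ℛ, 𝒦 r → ((Θ → ℝ) →₀ ℝ))
    (hγnn : ∀ r k ξ, 0 ≤ γ r k ξ)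
    (hγpost : ∀ r k, ∀ ξ ∈ (γ r k).support, (∀ θ, 0 ≤ ξ θ) ∧ ∑ θ, ξ θ = 1)
    (hγone : ∀ r k, ∑ ξ ∈ (γ r k).support, γ r k ξ = 1)
    (hγbayes : ∀ r k θ, ∑ ξ ∈ (γ r k).support, γ r k ξ * ξ θ = μ θ)
    (hγIC : ∀ r : ℛ, ∀ k k' : 𝒦 r, k ≠ k' →
      ∑ ξ ∈ (γ r k').support, γ r k' ξ * ∑ θ, ξ θ * u r k θ (bestA1 (u r) k ξ) ≤
        ∑ ξ ∈ (γ r k).support, γ r k ξ * ∑ θ, ξ θ * u r k θ (bestA1 (u r) k ξ))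
    -- truthful play probabilities
    (p : ∀ r : ℛ, 𝒦 r → Θ → ℝ)
    (hp : ∀ r k θ, p r k θ =
      (∑ ξ ∈ (γ r k).support, (if bestA1 (u r) k ξ = true then γ r k ξ * ξ θ else 0)) / μ θ) :
    ∃ (x : ∀ r : ℛ, 𝒦 r → Θ → ℝ) (φ : (∀ r, 𝒦 r) → Θ → Finset ℛ → ℝ),
      (∀ r k θ, x r k θ ∈ Set.Icc (0 : ℝ) 1) ∧
      -- persuasiveness of each direct marginal menu
      (∀ r k, 0 ≤ ∑ θ, μ θ * x r k θ * (u r k θ true - u r k θ false)) ∧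
      (∀ r k, 0 ≤ ∑ θ, μ θ * (1 - x r k θ) * (u r k θ false - u r k θ true)) ∧
      -- incentive compatibility of each direct marginal menu
      (∀ r : ℛ, ∀ k k' : 𝒦 r, k ≠ k' →
        max (∑ θ, μ θ * x r k' θ * u r k θ true) (∑ θ, μ θ * x r k' θ * u r k θ false) +
          max (∑ θ, μ θ * (1 - x r k' θ) * u r k θ true)
              (∑ θ, μ θ * (1 - x r k' θ) * u r k θ false) ≤
        ∑ θ, μ θ * (x r k θ * u r k θ true + (1 - x r k θ) * u r k θ false)) ∧
      -- `φ` is a signaling scheme consistent with the marginals `x`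
      (∀ 𝕜 : ∀ r, 𝒦 r, lam 𝕜 ≠ 0 → ∀ θ,
        (∀ R : Finset ℛ, 0 ≤ φ 𝕜 θ R) ∧
        (∑ R : Finset ℛ, φ 𝕜 θ R = 1) ∧
        (∀ r : ℛ, ∑ R ∈ Finset.univ.filter (fun R : Finset ℛ => r ∈ R), φ 𝕜 θ R =
          x r (𝕜 r) θ)) ∧
      -- optimality against every scheme consistent with the truthful play probabilities `p`
      (∀ ψ : (∀ r, 𝒦 r) → Θ → Finset ℛ → ℝ,
        (∀ 𝕜 : ∀ r, 𝒦 r, lam 𝕜 ≠ 0 → ∀ θ,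
          (∀ R : Finset ℛ, 0 ≤ ψ 𝕜 θ R) ∧
          (∑ R : Finset ℛ, ψ 𝕜 θ R = 1) ∧
          (∀ r : ℛ, ∑ R ∈ Finset.univ.filter (fun R : Finset ℛ => r ∈ R), ψ 𝕜 θ R =
            p r (𝕜 r) θ)) →
        ∑ 𝕜, lam 𝕜 * ∑ θ, μ θ * ∑ R : Finset ℛ, ψ 𝕜 θ R * f θ R ≤
          ∑ 𝕜, lam 𝕜 * ∑ θ, μ θ * ∑ R : Finset ℛ, φ 𝕜 θ R * f θ R) :=
  exists_optimal_direct_marginal_strategy_general μ hμpos u f lam hlam γ hγnn hγpost hγbayes hγIC p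
    hp
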